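/- arXiv:1810.01567 — 4 statements merged into one kernel-verified Lean document; each statement's English description precedes it below -/
import Mathlib

section
/- If x1, x2 ∈ R^n satisfy ||x2 - x1|| < r0, and r0 + 2·r̄_c ≤ r_in, then ||Q_in(Q_c(x1)) - Q_in(Q_c(x2))|| < 3·r̄_in, where r̄_in is the covering radius of Λ_in and r_in its inscribed radius. -/
/-- If `‖x2 - x1‖ < r0` and `r0 + 2·r̄_c ≤ r_in` (with `r_in ≤ r̄_in`), then
`‖Q_in(Q_c x1) - Q_in(Q_c x2)‖ < 3·r̄_in`, where `Q_c, Q_in` are nearest-neighbor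
quantizers of the nested lattices `Λ_in ⊂ Λ_c` with covering radii `r̄_c, r̄_in`,
and `r_in` is the inscribed radius of `Λ_in`. -/
theorem stmt2 (n : ℕ) (Λc Λin : Set (EuclideanSpace ℝ (Fin n)))
    (hnested : Λin ⊆ Λc)
    (Qc Qin : EuclideanSpace ℝ (Fin n) → EuclideanSpace ℝ (Fin n))
    (rbarc rbarin rin r0 : ℝ) (hr0 : 0 < r0)
    (hQcmem : ∀ x, Qc x ∈ Λc)
    (hQcnear : ∀ x, ∀ l ∈ Λc, ‖x - Qc x‖ ≤ ‖x - l‖)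
    (hQccov : ∀ x, ‖x - Qc x‖ ≤ rbarc)
    (hQinmem : ∀ x, Qin x ∈ Λin)
    (hQinnear : ∀ x, ∀ l ∈ Λin, ‖x - Qin x‖ ≤ ‖x - l‖)
    (hQincov : ∀ x, ‖x - Qin x‖ ≤ rbarin)
    (hinsc : rin ≤ rbarin)
    (hnest : r0 + 2 * rbarc ≤ rin)
    (x1 x2 : EuclideanSpace ℝ (Fin n)) (hx : ‖x2 - x1‖ < r0) :
    ‖Qin (Qc x1) - Qin (Qc x2)‖ < 3 * rbarin := by
  have h1 : ‖Qc x1 - Qc x2‖ < rbarin := by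
    have t : ‖Qc x1 - Qc x2‖ ≤ ‖Qc x1 - x1‖ + ‖x1 - x2‖ + ‖x2 - Qc x2‖ := by
      have := norm_sub_le_norm_sub_add_norm_sub (Qc x1) x2 (Qc x2)
      have := norm_sub_le_norm_sub_add_norm_sub (Qc x1) x1 x2
      calc ‖Qc x1 - Qc x2‖ ≤ ‖Qc x1 - x2‖ + ‖x2 - Qc x2‖ :=
            norm_sub_le_norm_sub_add_norm_sub _ _ _
        _ ≤ ‖Qc x1 - x1‖ + ‖x1 - x2‖ + ‖x2 - Qc x2‖ := by
            have := norm_sub_le_norm_sub_add_norm_sub (Qc x1) x1 x2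
            linarith
    have a1 : ‖Qc x1 - x1‖ ≤ rbarc := by
      have := hQccov x1; rwa [norm_sub_rev]
    have a2 : ‖x1 - x2‖ < r0 := by rwa [norm_sub_rev] at hx
    have a3 : ‖x2 - Qc x2‖ ≤ rbarc := hQccov x2
    linarith
  calc ‖Qin (Qc x1) - Qin (Qc x2)‖
      ≤ ‖Qin (Qc x1) - Qc x1‖ + ‖Qc x1 - Qc x2‖ + ‖Qc x2 - Qin (Qc x2)‖ := by
        have := norm_sub_le_norm_sub_add_norm_sub (Qin (Qc x1)) (Qc x2) (Qin (Qc x2))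
        have := norm_sub_le_norm_sub_add_norm_sub (Qin (Qc x1)) (Qc x1) (Qc x2)
        linarith
    _ < 3 * rbarin := by
        have b1 : ‖Qin (Qc x1) - Qc x1‖ ≤ rbarin := by
          have := hQincov (Qc x1); rwa [norm_sub_rev]
        have b3 : ‖Qc x2 - Qin (Qc x2)‖ ≤ rbarin := hQincov (Qc x2)
        linarith
end

section
/- Let Λ_2 ⊂ Λ_1 be nested full-rank lattices in R^n with index N_0 = ν(Λ_2)/ν(Λ_1), and let C = ∪_{λ ∈ V_{Λ_2}(0) ∩ Λ_1} V_{Λ_1}(λ). Then Σ_{λ ∈ V_{Λ_2}(0) ∩ Λ_1} ||λ||^2 = n·N_0·( G(C)·ν(Λ_2)^{2/n} − G_{Λ_1}·ν(Λ_1)^{2/n} ), where G(S) = (∫_S ||x||^2 dx)/(n·ν(S)^{1+2/n}) is the normalized second moment and G_{Λ_1} = G(V_{Λ_1}(0)). -/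
/-!
Both `V₂` and `C = ⋃_{λ ∈ V₂ ∩ Λ₁} (λ + V₁)` tile space under `Λ₂` (a point lies in a unique
`Λ₁`-cell `l + V₁`, and `l` in a unique `Λ₂`-cell `m + V₂`), so as fundamental domains of `Λ₂` they
have the same volume `N₀ ν(V₁)`. Because `V₁` has centroid `0`, the second moment of `λ + V₁` is
`‖λ‖² ν(V₁) + ∫_{V₁} ‖x‖²`; summing over `λ ∈ V₂ ∩ Λ₁` gives the second moment of `C`, and the
identity is this sum rewritten in terms of `G`.
-/

open MeasureTheory
open scoped RealInnerProductSpace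

/-- The normalized second moment `G(S)`. -/
noncomputable def nsm (n : ℕ) (S : Set (EuclideanSpace ℝ (Fin n))) : ℝ :=
  (∫ x in S, ‖x‖ ^ 2) / (n * (volume S).toReal ^ ((1 : ℝ) + 2 / n))

def IsTiling {E : Type*} [AddCommGroup E] (Λ : AddSubgroup E) (V : Set E) : Prop :=
  ∀ x, ∃! l, l ∈ Λ ∧ x ∈ (l + ·) '' V

section Tiling

variable {E : Type*} [AddCommGroup E] {Λ Λ' : AddSubgroup E} {V W : Set E}

lemma mem_image_add_left_iff {l x : E} : x ∈ (l + ·) '' V ↔ -l + x ∈ V := by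
  rw [Set.image_add_left]; rfl

lemma IsTiling.pairwiseDisjoint (h : IsTiling Λ V) :
    (Λ : Set E).PairwiseDisjoint (fun l => (l + ·) '' V) := fun _ hl _ hl' hne =>
  Set.disjoint_left.2 fun x hx hx' => hne ((h x).unique ⟨hl, hx⟩ ⟨hl', hx'⟩)

lemma IsTiling.biUnion_image_add (hle : Λ' ≤ Λ) (h : IsTiling Λ V) (h' : IsTiling Λ' W) :
    IsTiling Λ' (⋃ s ∈ W ∩ Λ, (s + ·) '' V) := by
  have hmem : ∀ m x, x ∈ (m + ·) '' ⋃ s ∈ W ∩ Λ, (s + ·) '' V ↔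
      ∃ s ∈ W ∩ (Λ : Set E), -(m + s) + x ∈ V := by
    intro m x
    simp only [mem_image_add_left_iff, Set.mem_iUnion₂, exists_prop, neg_add_rev, add_assoc]
  intro x
  obtain ⟨l, ⟨hl, hxl⟩, -⟩ := h x
  obtain ⟨m, ⟨hm, hlm⟩, -⟩ := h' l
  rw [mem_image_add_left_iff] at hxl hlm
  refine ⟨m, ⟨hm, (hmem m x).2 ⟨-m + l, ⟨hlm, add_mem (neg_mem (hle hm)) hl⟩, ?_⟩⟩, ?_⟩
  · simpa using hxl
  rintro m' ⟨hm', hx⟩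
  obtain ⟨s, ⟨hsW, hsΛ⟩, hxs⟩ := (hmem m' x).1 hx
  have hl' : m' + s = l := (h x).unique
    ⟨add_mem (hle hm') hsΛ, mem_image_add_left_iff.2 hxs⟩ ⟨hl, mem_image_add_left_iff.2 hxl⟩
  exact (h' l).unique
    ⟨hm', mem_image_add_left_iff.2 (by simpa [← hl'] using hsW)⟩ ⟨hm, mem_image_add_left_iff.2 hlm⟩

variable [MeasurableSpace E]

lemma IsTiling.isAddFundamentalDomain {μ : Measure E} (h : IsTiling Λ V)
    (hV : NullMeasurableSet V μ) : IsAddFundamentalDomain Λ V μ := by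
  refine .mk' hV fun x => ?_
  obtain ⟨l, ⟨hl, hx⟩, huniq⟩ := h x
  refine ⟨⟨-l, neg_mem hl⟩, mem_image_add_left_iff.1 hx, fun g hg => ?_⟩
  have : -(g : E) = l := huniq _
    ⟨neg_mem g.2, mem_image_add_left_iff.2 (by simpa [AddSubgroup.vadd_def] using hg)⟩
  ext
  simp [← this]

variable [MeasurableAdd E] {μ : Measure E} [μ.IsAddLeftInvariant]

lemma measure_image_add_left (l : E) (V : Set E) : μ ((l + ·) '' V) = μ V := by
  rw [Set.image_add_left, measure_preimage_add]

lemma IsTiling.countable [SigmaFinite μ] (h : IsTiling Λ V) (hV : MeasurableSet V)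
    (hpos : 0 < μ V) : Countable Λ := by
  have := Measure.countable_meas_pos_of_disjoint_iUnion (μ := μ)
    (As := fun l : Λ => ((l : E) + ·) '' V) (fun l => hV.const_vadd (l : E))
    h.pairwiseDisjoint.subtype
  simp only [measure_image_add_left, hpos, Set.ofPred_true] at this
  exact Set.countable_univ_iff.1 this

lemma setIntegral_image_add_left {F : Type*} [NormedAddCommGroup F] [NormedSpace ℝ F]
    (f : E → F) (l : E) (V : Set E) :
    ∫ x in (l + ·) '' V, f x ∂μ = ∫ x in V, f (l + x) ∂μ :=
  (measurePreserving_add_left μ l).setIntegral_image_emb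
    (MeasurableEquiv.addLeft l).measurableEmbedding f V

variable {S : Finset E}

lemma measure_biUnion_image_add_left (hS : (S : Set E).PairwiseDisjoint (fun l => (l + ·) '' V))
    (hV : MeasurableSet V) : μ (⋃ l ∈ S, (l + ·) '' V) = S.card * μ V := by
  rw [measure_biUnion_finset hS fun l _ => hV.const_vadd l]
  simp

lemma setIntegral_biUnion_image_add_left {F : Type*} [NormedAddCommGroup F] [NormedSpace ℝ F]
    {f : E → F} (hS : (S : Set E).PairwiseDisjoint (fun l => (l + ·) '' V))
    (hV : MeasurableSet V) (hf : ∀ l ∈ S, IntegrableOn f ((l + ·) '' V) μ) :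
    ∫ x in ⋃ l ∈ S, (l + ·) '' V, f x ∂μ = ∑ l ∈ S, ∫ x in V, f (l + x) ∂μ := by
  rw [integral_biUnion_finset (s := fun l => (l + ·) '' V) S (fun l _ => hV.const_vadd l) hS hf]
  simp_rw [setIntegral_image_add_left]

end Tiling

lemma Continuous.integrableOn_of_isBounded {X F : Type*} [PseudoMetricSpace X] [ProperSpace X]
    [MeasurableSpace X] [OpensMeasurableSpace X] {μ : Measure X} [IsFiniteMeasureOnCompacts μ]
    [NormedAddCommGroup F] {f : X → F} (hf : Continuous f) {s : Set X}
    (hs : Bornology.IsBounded s) : IntegrableOn f s μ :=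
  (hf.continuousOn.integrableOn_compact' hs.isCompact_closure measurableSet_closure).mono_set
    subset_closure

section SecondMoment

variable {E : Type*} [NormedAddCommGroup E] [InnerProductSpace ℝ E] [CompleteSpace E]
  [MeasurableSpace E] {μ : Measure E} {V : Set E}

lemma setIntegral_norm_add_sq (hfin : μ V ≠ ⊤) (hid : IntegrableOn (fun x => x) V μ)
    (hsq : IntegrableOn (‖·‖ ^ 2) V μ) (hcent : ∫ x in V, x ∂μ = 0) (l : E) :
    ∫ x in V, ‖l + x‖ ^ 2 ∂μ = ‖l‖ ^ 2 * μ.real V + ∫ x in V, ‖x‖ ^ 2 ∂μ := by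
  have hconst : IntegrableOn (fun _ => ‖l‖ ^ 2) V μ := integrableOn_const hfin
  have hlin : IntegrableOn (fun x => 2 * ⟪l, x⟫) V μ := (hid.const_inner l).const_mul 2
  have hmean : ∫ x in V, 2 * ⟪l, x⟫ ∂μ = 0 := by
    rw [integral_const_mul, integral_inner hid l, hcent, inner_zero_right, mul_zero]
  have hsum : IntegrableOn (fun x => ‖l‖ ^ 2 + 2 * ⟪l, x⟫) V μ := hconst.add hlin
  simp_rw [norm_add_sq_real]
  rw [integral_add hsum hsq, integral_add hconst hlin, hmean, setIntegral_const, smul_eq_mul]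
  ring

end SecondMoment

lemma nsm_mul_rpow_two_div {n : ℕ} {S : Set (EuclideanSpace ℝ (Fin n))}
    (hS : 0 < (volume S).toReal) :
    nsm n S * (volume S).toReal ^ ((2 : ℝ) / n) =
      (∫ x in S, ‖x‖ ^ 2) / (n * (volume S).toReal) := by
  have := (Real.rpow_pos_of_pos hS ((2 : ℝ) / n)).ne'
  rw [nsm, Real.rpow_add hS, Real.rpow_one]
  field_simp

theorem stmt6_general (n : ℕ) (hn : 0 < n)
    (Λ1 Λ2 : AddSubgroup (EuclideanSpace ℝ (Fin n))) (hnest : Λ2 ≤ Λ1)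
    (V1 V2 : Set (EuclideanSpace ℝ (Fin n)))
    (hV1m : MeasurableSet V1) (hV2m : MeasurableSet V2)
    (hpart1 : ∀ x, ∃! l, l ∈ Λ1 ∧ x ∈ (l + ·) '' V1)
    (hpart2 : ∀ x, ∃! l, l ∈ Λ2 ∧ x ∈ (l + ·) '' V2)
    (hcent : (∫ x in V1, x) = 0)
    (hvol1 : 0 < volume V1)
    (hbdd1 : Bornology.IsBounded V1)
    (S : Finset (EuclideanSpace ℝ (Fin n))) (hS : (S : Set (EuclideanSpace ℝ (Fin n))) = V2 ∩ (Λ1 : Set (EuclideanSpace ℝ (Fin n)))) :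
    ∑ l ∈ S, ‖l‖ ^ 2 =
      n * S.card *
        (nsm n (⋃ l ∈ S, (l + ·) '' V1) * (volume V2).toReal ^ ((2 : ℝ) / n)
          - nsm n V1 * (volume V1).toReal ^ ((2 : ℝ) / n)) := by
  have h1 : IsTiling Λ1 V1 := hpart1
  have h2 : IsTiling Λ2 V2 := hpart2
  have hdisj := h1.pairwiseDisjoint.subset (hS ▸ Set.inter_subset_right)
  have hC : IsTiling Λ2 (⋃ l ∈ S, (l + ·) '' V1) := by
    rw [← Finset.set_biUnion_coe, hS]
    exact h1.biUnion_image_add hnest h2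
  have : Countable Λ2 := by
    have := h1.countable hV1m hvol1
    exact (AddSubgroup.inclusion_injective hnest).countable
  have hV2C : volume V2 = volume (⋃ l ∈ S, (l + ·) '' V1) :=
    (h2.isAddFundamentalDomain hV2m.nullMeasurableSet).measure_eq <| hC.isAddFundamentalDomain
      (S.measurableSet_biUnion fun l _ => hV1m.const_vadd l).nullMeasurableSet
  have hvolC : (volume (⋃ l ∈ S, (l + ·) '' V1)).toReal = S.card * (volume V1).toReal := by
    rw [measure_biUnion_image_add_left hdisj hV1m, ENNReal.toReal_mul, ENNReal.toReal_natCast]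
  have hsq : Continuous fun x : EuclideanSpace ℝ (Fin n) => ‖x‖ ^ 2 := by fun_prop
  have hintC : ∫ x in ⋃ l ∈ S, (l + ·) '' V1, ‖x‖ ^ 2 =
      ∑ l ∈ S, (‖l‖ ^ 2 * (volume V1).toReal + ∫ x in V1, ‖x‖ ^ 2) := by
    rw [setIntegral_biUnion_image_add_left hdisj hV1m fun l _ =>
      hsq.integrableOn_of_isBounded (hbdd1.vadd l)]
    exact Finset.sum_congr rfl fun l _ => setIntegral_norm_add_sq hbdd1.measure_lt_top.ne
      (continuous_id'.integrableOn_of_isBounded hbdd1) (hsq.integrableOn_of_isBounded hbdd1) hcent l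
  have hN : 0 < S.card := by
    obtain ⟨l, ⟨hl, h0⟩, -⟩ := hpart2 0
    refine Finset.card_pos.2 ⟨-l, Finset.mem_coe.1 (hS ▸ ⟨?_, neg_mem (hnest hl)⟩)⟩
    simpa using mem_image_add_left_iff.1 h0
  have hν1 : 0 < (volume V1).toReal := ENNReal.toReal_pos hvol1.ne' hbdd1.measure_lt_top.ne
  have hνC : 0 < (volume (⋃ l ∈ S, (l + ·) '' V1)).toReal := by rw [hvolC]; positivity
  rw [hV2C, nsm_mul_rpow_two_div hνC, nsm_mul_rpow_two_div hν1, hintC, hvolC,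
    Finset.sum_add_distrib, ← Finset.sum_mul, Finset.sum_const, nsmul_eq_mul]
  field_simp
  ring

/-- For nested lattices `Λ₂ ⊂ Λ₁` with fundamental (Voronoi) cells `V₁, V₂`
(translates partition `ℝⁿ`, and `∫_{V₁} x dx = 0`), with `S = V₂ ∩ Λ₁` of cardinality `N₀`
and `C = ∪_{λ∈S} (λ + V₁)`:
`Σ_{λ∈S} ‖λ‖² = n·N₀·(G(C)·ν(Λ₂)^{2/n} − G(V₁)·ν(Λ₁)^{2/n})`. -/
theorem stmt6 (n : ℕ) (hn : 0 < n)
    (Λ1 Λ2 : AddSubgroup (EuclideanSpace ℝ (Fin n))) (hnest : Λ2 ≤ Λ1)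
    (V1 V2 : Set (EuclideanSpace ℝ (Fin n)))
    (hV1m : MeasurableSet V1) (hV2m : MeasurableSet V2)
    (hpart1 : ∀ x, ∃! l, l ∈ Λ1 ∧ x ∈ (l + ·) '' V1)
    (hpart2 : ∀ x, ∃! l, l ∈ Λ2 ∧ x ∈ (l + ·) '' V2)
    (hcent : (∫ x in V1, x) = 0)
    (hvol1 : 0 < volume V1) (hvol1' : volume V1 < ⊤) (hvol2 : volume V2 < ⊤)
    (hbdd1 : Bornology.IsBounded V1) (hbdd2 : Bornology.IsBounded V2)
    (hint1 : IntegrableOn (fun x => ‖x‖ ^ 2) V1 volume)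
    (S : Finset (EuclideanSpace ℝ (Fin n))) (hS : (S : Set (EuclideanSpace ℝ (Fin n))) = V2 ∩ (Λ1 : Set (EuclideanSpace ℝ (Fin n)))) :
    ∑ l ∈ S, ‖l‖ ^ 2 =
      n * S.card *
        (nsm n (⋃ l ∈ S, (l + ·) '' V1) * (volume V2).toReal ^ ((2 : ℝ) / n)
          - nsm n V1 * (volume V1).toReal ^ ((2 : ℝ) / n)) :=
  stmt6_general n hn Λ1 Λ2 hnest V1 V2 hV1m hV2m hpart1 hpart2 hcent hvol1 hbdd1 S hS
end

section
/- Let Λ_{2,0} ⊂ Λ_{1,0} be nested lattices and for scale factors ω_1, ω_2 > 0 with Λ_2 = ω_2 Λ_{2,0} ⊂ Λ_1 = ω_1 Λ_{1,0} still nested, let C = ∪_{λ ∈ V_{Λ_2}(0) ∩ Λ_1} V_{Λ_1}(λ). Then G(C) → G_{Λ_2} as ω_2/ω_1 → ∞, where G denotes the normalized second moment. -/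
open MeasureTheory Filter Pointwise

/-- The lattice generated by a basis `B`: all integer linear combinations of the rows. -/
def latticeOf (n : ℕ) (B : Module.Basis (Fin n) ℝ (EuclideanSpace ℝ (Fin n))) :
    Set (EuclideanSpace ℝ (Fin n)) :=
  Set.range fun c : Fin n → ℤ => ∑ i, (c i : ℝ) • B i

/-- The (closed) Voronoi region of the origin for a set of lattice points `L`. -/
def cVor (n : ℕ) (L : Set (EuclideanSpace ℝ (Fin n))) : Set (EuclideanSpace ℝ (Fin n)) :=
  {x | ∀ l ∈ L, ‖x‖ ≤ ‖x - l‖}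

/-!
Write `V = V_{Λ_{2,0}}` and rescale everything by `ω₂⁻¹`: the cell union becomes the Minkowski
sum `(V ∩ sΛ_{1,0}) + V_{sΛ_{1,0}}` with `s = ω₁/ω₂ → 0`. If `V` contains the ball of radius `r`
and the cells of `Λ_{1,0}` lie in the ball of radius `ρ`, convexity of `V` squeezes this union
between `(1 - sρ/r) • V` and `(1 + sρ/r) • V`. Volume and second moment scale like `t^n` and
`t^(n+2)`, so both converge to those of `V`, and hence so does the normalized second moment.
-/

open Set Metric Submodule Topology Bornology
open scoped RealInnerProductSpace

lemma closedBall_zero_subset_smul {E : Type*} [NormedAddCommGroup E] [NormedSpace ℝ E]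
    {V : Set E} {r ε : ℝ} (hr : 0 < r) (hε : 0 ≤ ε) (h : closedBall 0 r ⊆ V) :
    closedBall 0 ε ⊆ (ε / r) • V := by
  calc closedBall (0 : E) ε = (ε / r) • closedBall 0 r := by
        rw [smul_closedBall _ _ hr.le, smul_zero, Real.norm_of_nonneg (by positivity),
          div_mul_cancel₀ _ hr.ne']
    _ ⊆ (ε / r) • V := smul_set_mono h

lemma tendsto_of_pow_sandwich {ι : Type*} {l : Filter ι} {δ f : ι → ℝ} {c : ℝ} (m : ℕ)
    (hδ : Tendsto δ l (𝓝 0)) (hlo : ∀ᶠ k in l, (1 - δ k) ^ m * c ≤ f k)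
    (hhi : ∀ᶠ k in l, f k ≤ (1 + δ k) ^ m * c) : Tendsto f l (𝓝 c) := by
  have hlim : ∀ s : ℝ, Tendsto (fun k => (1 + s * δ k) ^ m * c) l (𝓝 c) := fun s => by
    simpa using (((tendsto_const_nhds (x := (1 : ℝ))).add (hδ.const_mul s)).pow m).mul_const c
  exact tendsto_of_tendsto_of_tendsto_of_le_of_le' (by simpa [sub_eq_add_neg] using hlim (-1))
    (by simpa using hlim 1) hlo hhi

section Voronoi

variable {n : ℕ} {L M : Set (EuclideanSpace ℝ (Fin n))}

lemma zero_mem_cVor : (0 : EuclideanSpace ℝ (Fin n)) ∈ cVor n L := by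
  intro l _
  simp

lemma convex_cVor : Convex ℝ (cVor n L) := by
  have h : cVor n L = ⋂ l ∈ L, {x | ⟪l, x⟫ ≤ ‖l‖ ^ 2 / 2} := by
    ext x
    simp only [cVor, mem_iInter]
    refine forall₂_congr fun l _ => ?_
    rw [mem_ofPred_eq, ← sq_le_sq₀ (norm_nonneg _) (norm_nonneg _), norm_sub_sq_real,
      real_inner_comm]
    constructor <;> intro <;> linarith
  rw [h]
  exact convex_iInter₂ fun l _ => convex_halfSpace_le (innerₗ _ l).isLinear _

lemma smul_cVor {a : ℝ} (ha : a ≠ 0) : cVor n (a • L) = a • cVor n L := by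
  have hsub : ∀ (b : ℝ) (K : Set (EuclideanSpace ℝ (Fin n))), b • cVor n K ⊆ cVor n (b • K) := by
    rintro b K _ ⟨x, hx, rfl⟩ _ ⟨l, hl, rfl⟩
    rw [← smul_sub, norm_smul, norm_smul]
    exact mul_le_mul_of_nonneg_left (hx l hl) (norm_nonneg b)
  refine Subset.antisymm ?_ (hsub a L)
  rw [subset_smul_set_iff₀ ha]
  simpa [inv_smul_smul₀ ha] using hsub a⁻¹ (a • L)

lemma cVor_subset_closedBall {ρ : ℝ} (h : ∀ x, ∃ l ∈ L, ‖x - l‖ ≤ ρ) :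
    cVor n L ⊆ closedBall 0 ρ := fun x hx => by
  obtain ⟨l, hl, hxl⟩ := h x
  simpa using (hx l hl).trans hxl

lemma closedBall_subset_cVor {r : ℝ} (h : ∀ l ∈ L, l ≠ 0 → 2 * r ≤ ‖l‖) :
    closedBall 0 r ⊆ cVor n L := fun x hx l hl => by
  rw [mem_closedBall_zero_iff] at hx
  rcases eq_or_ne l 0 with rfl | hl0
  · simp
  · linarith [h l hl hl0, norm_sub_norm_le l x, norm_sub_rev x l]

end Voronoi

section Lattice

variable {n : ℕ} (B : Module.Basis (Fin n) ℝ (EuclideanSpace ℝ (Fin n)))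

lemma latticeOf_eq_span : latticeOf n B = span ℤ (range B) := by
  ext x
  simp [latticeOf, mem_span_range_iff_exists_fun, Int.cast_smul_eq_zsmul]

lemma exists_sub_mem_cVor_latticeOf (x : EuclideanSpace ℝ (Fin n)) :
    ∃ l ∈ latticeOf n B, x - l ∈ cVor n (latticeOf n B) := by
  have hclosed : IsClosed (latticeOf n B) := by
    rw [latticeOf_eq_span, ← coe_toAddSubgroup]
    exact AddSubgroup.isClosed_of_discrete
  have hzero : (0 : EuclideanSpace ℝ (Fin n)) ∈ latticeOf n B := by
    simp [latticeOf_eq_span]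
  obtain ⟨l, hl, hdist⟩ := hclosed.exists_infDist_eq_dist ⟨0, hzero⟩ x
  refine ⟨l, hl, fun m hm => ?_⟩
  have hlm : l + m ∈ latticeOf n B := by
    rw [latticeOf_eq_span] at hl hm ⊢
    exact add_mem hl hm
  rw [sub_sub, ← dist_eq_norm, ← dist_eq_norm, ← hdist]
  exact infDist_le_dist_of_mem hlm

lemma cVor_latticeOf_subset_closedBall :
    cVor n (latticeOf n B) ⊆ closedBall 0 (∑ i, ‖B i‖) :=
  cVor_subset_closedBall fun x =>
    ⟨ZSpan.floor B x, by simp [latticeOf_eq_span], ZSpan.norm_fract_le B x⟩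

lemma exists_closedBall_subset_cVor_latticeOf :
    ∃ r > 0, closedBall 0 r ⊆ cVor n (latticeOf n B) := by
  obtain ⟨ε, hε, hsmall⟩ := Metric.isOpen_singleton_iff.1
    (isOpen_discrete ({0} : Set (span ℤ (range B))))
  refine ⟨ε / 2, half_pos hε, closedBall_subset_cVor fun l hl hl0 => ?_⟩
  rw [latticeOf_eq_span] at hl
  by_contra! hlt
  exact hl0 (congrArg Subtype.val (hsmall ⟨l, hl⟩ (by simpa [mul_div_cancel₀] using hlt)))

lemma exists_sub_mem_cVor_smul_latticeOf {a : ℝ} (ha : a ≠ 0) (x : EuclideanSpace ℝ (Fin n)) :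
    ∃ l ∈ a • latticeOf n B, x - l ∈ cVor n (a • latticeOf n B) := by
  obtain ⟨l, hl, hxl⟩ := exists_sub_mem_cVor_latticeOf B (a⁻¹ • x)
  refine ⟨a • l, smul_mem_smul_set hl, ?_⟩
  rw [smul_cVor ha]
  exact ⟨_, hxl, by simp only [smul_sub, smul_inv_smul₀ ha]⟩

lemma cVor_smul_latticeOf_subset_closedBall {a : ℝ} (ha : 0 < a) :
    cVor n (a • latticeOf n B) ⊆ closedBall 0 (a * ∑ i, ‖B i‖) := by
  calc cVor n (a • latticeOf n B) = a • cVor n (latticeOf n B) := smul_cVor ha.ne'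
    _ ⊆ a • closedBall 0 (∑ i, ‖B i‖) := smul_set_mono (cVor_latticeOf_subset_closedBall B)
    _ = closedBall 0 (a * ∑ i, ‖B i‖) := by
      rw [_root_.smul_closedBall _ _ (by positivity), smul_zero, Real.norm_of_nonneg ha.le]

end Lattice

section MinkowskiSum

variable {n : ℕ} {L M : Set (EuclideanSpace ℝ (Fin n))} {r ε : ℝ}

lemma smul_cVor_inter_add_cVor {a : ℝ} (ha : a ≠ 0) :
    a • ((cVor n M ∩ L) + cVor n L) = (cVor n (a • M) ∩ a • L) + cVor n (a • L) := by
  rw [smul_add, smul_set_inter₀ ha, smul_cVor ha, smul_cVor ha]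

lemma cVor_inter_add_cVor_subset (hr : 0 < r) (hM : closedBall 0 r ⊆ cVor n M)
    (hL : cVor n L ⊆ closedBall 0 ε) :
    (cVor n M ∩ L) + cVor n L ⊆ (1 + ε / r) • cVor n M := by
  have hε : 0 ≤ ε := by simpa using hL zero_mem_cVor
  rintro _ ⟨l, ⟨hlM, -⟩, w, hw, rfl⟩
  rw [convex_cVor.add_smul zero_le_one (by positivity), one_smul]
  exact add_mem_add hlM (closedBall_zero_subset_smul hr hε hM (hL hw))

lemma subset_cVor_inter_add_cVor (hr : 0 < r) (hM : closedBall 0 r ⊆ cVor n M)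
    (hL : cVor n L ⊆ closedBall 0 ε) (hcover : ∀ x, ∃ l ∈ L, x - l ∈ cVor n L) (hεr : ε ≤ r) :
    (1 - ε / r) • cVor n M ⊆ (cVor n M ∩ L) + cVor n L := by
  have hε : 0 ≤ ε := by simpa using hL zero_mem_cVor
  intro p hp
  obtain ⟨l, hl, hpl⟩ := hcover p
  have hlp : l - p ∈ (ε / r) • cVor n M :=
    closedBall_zero_subset_smul hr hε hM (by simpa [norm_sub_rev] using hL hpl)
  -- `l = p + (l - p)` and, `V` being convex, `(1 - ε/r) • V + (ε/r) • V = V`.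
  have hlM : l ∈ cVor n M := by
    have hsum := convex_cVor (n := n) (L := M).add_smul
      (sub_nonneg.2 ((div_le_one hr).2 hεr)) (div_nonneg hε hr.le)
    rw [sub_add_cancel, one_smul] at hsum
    have := add_mem_add hp hlp
    rwa [add_sub_cancel, ← hsum] at this
  exact ⟨l, ⟨hlM, hl⟩, p - l, hpl, add_sub_cancel l p⟩

end MinkowskiSum

section SecondMoment

variable {n : ℕ}

lemma toReal_volume_smul (a : ℝ) (S : Set (EuclideanSpace ℝ (Fin n))) :
    (volume (a • S)).toReal = |a| ^ n * (volume S).toReal := by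
  rw [Measure.addHaar_smul, ENNReal.toReal_mul, ENNReal.toReal_ofReal (abs_nonneg _),
    finrank_euclideanSpace_fin, abs_pow]

lemma setIntegral_norm_sq_smul {a : ℝ} (ha : a ≠ 0) (S : Set (EuclideanSpace ℝ (Fin n))) :
    ∫ x in a • S, ‖x‖ ^ 2 = |a| ^ (n + 2) * ∫ x in S, ‖x‖ ^ 2 := by
  have h := Measure.setIntegral_comp_smul volume (fun x : EuclideanSpace ℝ (Fin n) => ‖x‖ ^ 2) S ha
  simp only [norm_smul, mul_pow, Real.norm_eq_abs, sq_abs, integral_const_mul,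
    finrank_euclideanSpace_fin, smul_eq_mul, abs_inv, abs_pow] at h
  rw [eq_inv_mul_iff_mul_eq₀ (by positivity)] at h
  rw [← h, pow_add, sq_abs, mul_assoc]

lemma nsm_smul {a : ℝ} (ha : a ≠ 0) (S : Set (EuclideanSpace ℝ (Fin n))) :
    nsm n (a • S) = nsm n S := by
  rcases n.eq_zero_or_pos with rfl | hn
  · simp [nsm]
  have hpow : (|a| ^ n) ^ ((1 : ℝ) + 2 / n) = |a| ^ (n + 2) := by
    rw [← Real.rpow_natCast, ← Real.rpow_mul (abs_nonneg a), ← Real.rpow_natCast]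
    congr 1
    push_cast
    field_simp
  unfold nsm
  rw [setIntegral_norm_sq_smul ha, toReal_volume_smul, Real.mul_rpow (by positivity)
    ENNReal.toReal_nonneg, hpow, mul_left_comm, mul_div_mul_left _ _ (by positivity)]

variable {ι : Type*} {l : Filter ι} {V : Set (EuclideanSpace ℝ (Fin n))}
  {S : ι → Set (EuclideanSpace ℝ (Fin n))} {δ : ι → ℝ}

lemma tendsto_toReal_volume_of_sandwich (hV : IsBounded V) (hδ : Tendsto δ l (𝓝 0))
    (hlo : ∀ᶠ k in l, (1 - δ k) • V ⊆ S k) (hhi : ∀ᶠ k in l, S k ⊆ (1 + δ k) • V) :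
    Tendsto (fun k => (volume (S k)).toReal) l (𝓝 (volume V).toReal) := by
  have hδ1 : ∀ᶠ k in l, δ k ∈ Ioo (-1) 1 := hδ.eventually (Ioo_mem_nhds (by norm_num) one_pos)
  refine tendsto_of_pow_sandwich n hδ ?_ ?_
  · filter_upwards [hlo, hhi, hδ1] with k hlo hhi hk
    rw [← abs_of_nonneg (by linarith [hk.2] : 0 ≤ 1 - δ k), ← toReal_volume_smul]
    exact ENNReal.toReal_mono
      (ne_top_of_le_ne_top (hV.smul₀ _).measure_lt_top.ne (measure_mono hhi)) (measure_mono hlo)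
  · filter_upwards [hhi, hδ1] with k hhi hk
    rw [← abs_of_nonneg (by linarith [hk.1] : 0 ≤ 1 + δ k), ← toReal_volume_smul]
    exact ENNReal.toReal_mono (hV.smul₀ _).measure_lt_top.ne (measure_mono hhi)

lemma tendsto_setIntegral_norm_sq_of_sandwich (hV : IsBounded V) (hδ : Tendsto δ l (𝓝 0))
    (hlo : ∀ᶠ k in l, (1 - δ k) • V ⊆ S k) (hhi : ∀ᶠ k in l, S k ⊆ (1 + δ k) • V) :
    Tendsto (fun k => ∫ x in S k, ‖x‖ ^ 2) l (𝓝 (∫ x in V, ‖x‖ ^ 2)) := by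
  have hδ1 : ∀ᶠ k in l, δ k ∈ Ioo (-1) 1 := hδ.eventually (Ioo_mem_nhds (by norm_num) one_pos)
  have hint : ∀ c : ℝ, IntegrableOn (fun x => ‖x‖ ^ 2) (c • V) := fun c =>
    ((continuous_norm.pow 2).continuousOn.integrableOn_compact
      (hV.smul₀ c).isCompact_closure).mono_set subset_closure
  have hnonneg : ∀ s, 0 ≤ᵐ[volume.restrict s] fun x : EuclideanSpace ℝ (Fin n) => ‖x‖ ^ 2 :=
    fun _ => Eventually.of_forall fun _ => sq_nonneg _
  refine tendsto_of_pow_sandwich (n + 2) hδ ?_ ?_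
  · filter_upwards [hlo, hhi, hδ1] with k hlo hhi hk
    rw [← abs_of_pos (by linarith [hk.2] : 0 < 1 - δ k),
      ← setIntegral_norm_sq_smul (by linarith [hk.2])]
    exact setIntegral_mono_set ((hint _).mono_set hhi) (hnonneg _) hlo.eventuallyLE
  · filter_upwards [hhi, hδ1] with k hhi hk
    rw [← abs_of_pos (by linarith [hk.1] : 0 < 1 + δ k),
      ← setIntegral_norm_sq_smul (by linarith [hk.1])]
    exact setIntegral_mono_set (hint _) (hnonneg _) hhi.eventuallyLE

theorem tendsto_nsm_of_sandwich (hV : IsBounded V) (hV0 : volume V ≠ 0) (hδ : Tendsto δ l (𝓝 0))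
    (hlo : ∀ᶠ k in l, (1 - δ k) • V ⊆ S k) (hhi : ∀ᶠ k in l, S k ⊆ (1 + δ k) • V) :
    Tendsto (fun k => nsm n (S k)) l (𝓝 (nsm n V)) := by
  rcases n.eq_zero_or_pos with rfl | hn
  · simpa [nsm] using tendsto_const_nhds
  have hV0' : 0 < (volume V).toReal := ENNReal.toReal_pos hV0 hV.measure_lt_top.ne
  exact (tendsto_setIntegral_norm_sq_of_sandwich hV hδ hlo hhi).div
    (tendsto_const_nhds.mul ((tendsto_toReal_volume_of_sandwich hV hδ hlo hhi).rpow_const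
      (Or.inl hV0'.ne'))) (by positivity)

end SecondMoment

theorem tendsto_nsm_cVor_inter_add_cVor_smul {n : ℕ} {ι : Type*} {l : Filter ι}
    (B₁ B₂ : Module.Basis (Fin n) ℝ (EuclideanSpace ℝ (Fin n))) {s : ι → ℝ}
    (hs : Tendsto s l (𝓝[>] 0)) :
    Tendsto (fun k => nsm n ((cVor n (latticeOf n B₂) ∩ s k • latticeOf n B₁) +
      cVor n (s k • latticeOf n B₁))) l (𝓝 (nsm n (cVor n (latticeOf n B₂)))) := by
  obtain ⟨r, hr, hball⟩ := exists_closedBall_subset_cVor_latticeOf B₂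
  have hbdd : IsBounded (cVor n (latticeOf n B₂)) :=
    isBounded_closedBall.subset (cVor_latticeOf_subset_closedBall B₂)
  have hvol : volume (cVor n (latticeOf n B₂)) ≠ 0 :=
    ((measure_closedBall_pos volume 0 hr).trans_le (measure_mono hball)).ne'
  have hpos : ∀ᶠ k in l, 0 < s k := hs.eventually self_mem_nhdsWithin
  have hs₀ : Tendsto (fun k => s k * ∑ i, ‖B₁ i‖) l (𝓝 0) := by
    simpa using (tendsto_nhds_of_tendsto_nhdsWithin hs).mul_const _
  refine tendsto_nsm_of_sandwich hbdd hvol (by simpa using hs₀.div_const r) ?_ ?_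
  · filter_upwards [hpos, hs₀.eventually (eventually_le_nhds hr)] with k hk hkr
    exact subset_cVor_inter_add_cVor hr hball (cVor_smul_latticeOf_subset_closedBall B₁ hk)
      (exists_sub_mem_cVor_smul_latticeOf B₁ hk.ne') hkr
  · filter_upwards [hpos] with k hk
    exact cVor_inter_add_cVor_subset hr hball (cVor_smul_latticeOf_subset_closedBall B₁ hk)

theorem stmt12_general (n : ℕ)
    (B1 B2 : Module.Basis (Fin n) ℝ (EuclideanSpace ℝ (Fin n)))
    (ω1 ω2 : ℕ → ℝ)
    (hratio : Tendsto (fun k => ω2 k / ω1 k) atTop atTop) :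
    Tendsto
      (fun k => nsm n
        (⋃ l ∈ cVor n (ω2 k • latticeOf n B2) ∩ (ω1 k • latticeOf n B1),
          (l + ·) '' cVor n (ω1 k • latticeOf n B1)))
      atTop (nhds (nsm n (cVor n (latticeOf n B2)))) := by
  have hs : Tendsto (fun k => ω1 k / ω2 k) atTop (𝓝[>] 0) := by
    simpa [Function.comp_def, inv_div] using tendsto_inv_atTop_nhdsGT_zero.comp hratio
  refine (tendsto_nsm_cVor_inter_add_cVor_smul B1 B2 hs).congr' ?_
  filter_upwards [hs.eventually self_mem_nhdsWithin] with k hk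
  have hω2 : ω2 k ≠ 0 := by
    rintro h
    simp [h] at hk
  rw [iUnion_add_left_image, ← nsm_smul hω2, smul_cVor_inter_add_cVor hω2, smul_smul,
    mul_div_cancel₀ _ hω2]

/-- For nested lattices `Λ₂ = ω₂Λ_{2,0} ⊂ Λ₁ = ω₁Λ_{1,0}`, the normalized second moment of
`C = ∪_{λ ∈ V_{Λ₂}(0) ∩ Λ₁} V_{Λ₁}(λ)` tends to `G_{Λ₂}` as `ω₂/ω₁ → ∞`. -/
theorem stmt12 (n : ℕ) (hn : 0 < n)
    (B1 B2 : Module.Basis (Fin n) ℝ (EuclideanSpace ℝ (Fin n)))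
    (hnest0 : latticeOf n B2 ⊆ latticeOf n B1)
    (ω1 ω2 : ℕ → ℝ) (hω1 : ∀ k, 0 < ω1 k) (hω2 : ∀ k, 0 < ω2 k)
    (hnest : ∀ k, ω2 k • latticeOf n B2 ⊆ ω1 k • latticeOf n B1)
    (hratio : Tendsto (fun k => ω2 k / ω1 k) atTop atTop) :
    Tendsto
      (fun k => nsm n
        (⋃ l ∈ cVor n (ω2 k • latticeOf n B2) ∩ (ω1 k • latticeOf n B1),
          (l + ·) '' cVor n (ω1 k • latticeOf n B1)))
      atTop (nhds (nsm n (cVor n (latticeOf n B2)))) :=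
  stmt12_general n B1 B2 ω1 ω2 hratio
end

section
/- Let Λ_2 ⊂ Λ be nested full-rank lattices with γ = 1 − r̄_Λ/r_{Λ_2} > 0, where r̄_Λ is the covering radius of Λ and r_{Λ_2} the inscribed radius of Λ_2. Let C = ∪_{λ ∈ V_{Λ_2}(0) ∩ Λ} V_Λ(λ). Then γ^n ≤ ν(C ∩ V_{Λ_2}(0))/ν(Λ_2) ≤ 1. -/
open MeasureTheory Pointwise

open RealInnerProductSpace

lemma norm_le_norm_sub_iff_aux {n : ℕ} (x m : EuclideanSpace ℝ (Fin n)) :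
    ‖x‖ ≤ ‖x - m‖ ↔ 2 * ⟪x, m⟫ ≤ ‖m‖ ^ 2 := by
  constructor
  · intro h
    nlinarith [norm_sub_sq_real x m, norm_nonneg x, norm_nonneg (x - m),
      sq_nonneg (‖x‖ - ‖x - m‖)]
  · intro h
    have h2 : ‖x‖ ^ 2 ≤ ‖x - m‖ ^ 2 := by nlinarith [norm_sub_sq_real x m]
    exact (pow_le_pow_iff_left₀ (norm_nonneg _) (norm_nonneg _) two_ne_zero).mp h2

/-- With `γ = 1 − r̄_Λ/r_{Λ₂} > 0` and `C = ∪_{λ ∈ V_{Λ₂}(0) ∩ Λ} V_Λ(λ)`,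
`γⁿ ≤ ν(C ∩ V_{Λ₂}(0))/ν(Λ₂) ≤ 1`. -/
theorem stmt14 (n : ℕ) (hn : 0 < n)
    (Λ Λ2 : AddSubgroup (EuclideanSpace ℝ (Fin n)))
    (hnest : Λ2 ≤ Λ)
    (Q : EuclideanSpace ℝ (Fin n) → EuclideanSpace ℝ (Fin n))
    (rbar1 r2 : ℝ) (hr2pos : 0 < r2)
    (hQmem : ∀ x, Q x ∈ Λ)
    (hQnear : ∀ x, ∀ l ∈ Λ, ‖x - Q x‖ ≤ ‖x - l‖)
    (hQcov : ∀ x, ‖x - Q x‖ ≤ rbar1)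
    (hr2 : Metric.ball 0 r2 ⊆ cVor n (Λ2 : Set (EuclideanSpace ℝ (Fin n))))
    (cells : EuclideanSpace ℝ (Fin n) → Set (EuclideanSpace ℝ (Fin n)))
    (hpart : ∀ x : EuclideanSpace ℝ (Fin n), ∃! l, l ∈ Λ ∧ x ∈ cells l)
    (hcells : ∀ l ∈ Λ, ∀ x ∈ cells l, ∀ m ∈ Λ, ‖x - l‖ ≤ ‖x - m‖)
    (hvolpos : 0 < volume (cVor n (Λ2 : Set (EuclideanSpace ℝ (Fin n)))))
    (hvolfin : volume (cVor n (Λ2 : Set (EuclideanSpace ℝ (Fin n)))) < ⊤)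
    (γ : ℝ) (hγ : γ = 1 - rbar1 / r2) (hγpos : 0 < γ) :
    γ ^ n ≤
        (volume ((⋃ l ∈ cVor n (Λ2 : Set (EuclideanSpace ℝ (Fin n))) ∩
              (Λ : Set (EuclideanSpace ℝ (Fin n))), cells l) ∩
            cVor n (Λ2 : Set (EuclideanSpace ℝ (Fin n))))).toReal /
          (volume (cVor n (Λ2 : Set (EuclideanSpace ℝ (Fin n))))).toReal ∧
      (volume ((⋃ l ∈ cVor n (Λ2 : Set (EuclideanSpace ℝ (Fin n))) ∩
            (Λ : Set (EuclideanSpace ℝ (Fin n))), cells l) ∩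
          cVor n (Λ2 : Set (EuclideanSpace ℝ (Fin n))))).toReal /
        (volume (cVor n (Λ2 : Set (EuclideanSpace ℝ (Fin n))))).toReal ≤ 1 := by
  classical
  set V := cVor n (Λ2 : Set (EuclideanSpace ℝ (Fin n))) with hV
  set C := (⋃ l ∈ V ∩ (Λ : Set (EuclideanSpace ℝ (Fin n))), cells l) with hC
  have hrbar_nonneg : 0 ≤ rbar1 := le_trans (norm_nonneg _) (hQcov 0)
  have hγle1 : γ ≤ 1 := by
    rw [hγ]
    have : 0 ≤ rbar1 / r2 := div_nonneg hrbar_nonneg hr2pos.le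
    linarith
  -- every nonzero point of Λ2 has norm at least 2 * r2
  have hmin : ∀ m ∈ Λ2, m ≠ 0 → 2 * r2 ≤ ‖m‖ := by
    intro m hm hm0
    by_contra hlt
    push_neg at hlt
    have hmpos : 0 < ‖m‖ := norm_pos_iff.mpr hm0
    have hhalf : (1:ℝ)/2 < r2 / ‖m‖ := by
      rw [lt_div_iff₀ hmpos]; linarith
    set t : ℝ := ((1:ℝ)/2 + r2 / ‖m‖)/2 with ht
    have ht1 : (1:ℝ)/2 < t := by rw [ht]; linarith
    have ht2 : t < r2 / ‖m‖ := by rw [ht]; linarith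
    have hxball : t • m ∈ Metric.ball (0 : EuclideanSpace ℝ (Fin n)) r2 := by
      rw [Metric.mem_ball, dist_zero_right, norm_smul, Real.norm_eq_abs,
        abs_of_pos (by linarith : (0:ℝ) < t)]
      calc t * ‖m‖ < (r2 / ‖m‖) * ‖m‖ := by
            exact mul_lt_mul_of_pos_right ht2 hmpos
        _ = r2 := by field_simp
    have := (norm_le_norm_sub_iff_aux (t • m) m).mp (hr2 hxball m hm)
    rw [real_inner_smul_left, real_inner_self_eq_norm_sq] at this
    nlinarith [mul_pos (show (0:ℝ) < 2*t-1 by linarith) (pow_pos hmpos 2)]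
  -- the scaled Voronoi cell is contained in C ∩ V
  have hsub : γ • V ⊆ C ∩ V := by
    rintro x ⟨y, hy, rfl⟩
    have hyV : ∀ m ∈ Λ2, 2 * ⟪y, m⟫ ≤ ‖m‖ ^ 2 := fun m hm =>
      (norm_le_norm_sub_iff_aux y m).mp (hy m hm)
    constructor
    · -- γ • y ∈ C
      obtain ⟨l, ⟨hlΛ, hlc⟩, -⟩ := hpart (γ • y)
      have hnear : ‖γ • y - l‖ ≤ rbar1 :=
        le_trans (hcells l hlΛ _ hlc (Q (γ • y)) (hQmem _)) (hQcov _)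
      have hlV : l ∈ V := by
        intro m hm
        rw [norm_le_norm_sub_iff_aux]
        rcases eq_or_ne m 0 with rfl | hm0
        · simp
        · have h1 : 2 * ⟪γ • y, m⟫ ≤ γ * ‖m‖ ^ 2 := by
            rw [real_inner_smul_left]
            nlinarith [hyV m hm]
          have h2 : ⟪l - γ • y, m⟫ ≤ rbar1 * ‖m‖ := by
            calc ⟪l - γ • y, m⟫ ≤ ‖l - γ • y‖ * ‖m‖ := real_inner_le_norm _ _
              _ ≤ rbar1 * ‖m‖ := by
                  rw [norm_sub_rev] at hnear
                  exact mul_le_mul_of_nonneg_right hnear (norm_nonneg _)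
          have h3 : ⟪l, m⟫ = ⟪γ • y, m⟫ + ⟪l - γ • y, m⟫ := by
            rw [← inner_add_left]; congr 1; abel
          have hm2 : 2 * r2 ≤ ‖m‖ := hmin m hm hm0
          have hγ' : γ * r2 = r2 - rbar1 := by rw [hγ]; field_simp
          nlinarith [norm_nonneg m, hr2pos,
            mul_nonneg (mul_nonneg hrbar_nonneg (norm_nonneg m)) (sub_nonneg.mpr hm2)]
      exact Set.mem_biUnion ⟨hlV, hlΛ⟩ hlc
    · -- γ • y ∈ V
      intro m hm
      rw [norm_le_norm_sub_iff_aux, real_inner_smul_left]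
      nlinarith [hyV m hm, real_inner_self_eq_norm_sq m, sq_nonneg ‖m‖]
  -- volume computation
  have hmeas : volume (γ • V) = ENNReal.ofReal (γ ^ n) * volume V := by
    rw [MeasureTheory.Measure.addHaar_smul, finrank_euclideanSpace_fin,
      abs_pow, abs_of_pos hγpos]
  have hlow : ENNReal.ofReal (γ ^ n) * volume V ≤ volume (C ∩ V) := by
    rw [← hmeas]; exact measure_mono hsub
  have hCV_le : volume (C ∩ V) ≤ volume V := measure_mono Set.inter_subset_right
  have hCV_fin : volume (C ∩ V) ≠ ⊤ := (lt_of_le_of_lt hCV_le hvolfin).ne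
  have hbpos : 0 < (volume V).toReal :=
    ENNReal.toReal_pos hvolpos.ne' hvolfin.ne
  constructor
  · rw [le_div_iff₀ hbpos]
    have := ENNReal.toReal_mono hCV_fin hlow
    rwa [ENNReal.toReal_mul, ENNReal.toReal_ofReal (pow_nonneg hγpos.le n)] at this
  · rw [div_le_one hbpos]
    exact ENNReal.toReal_mono hvolfin.ne hCV_le
end
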